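/- Let K ⊂ R^d be a convex body with 0 in its interior, and let y be in the interior of the polar body K°. Then φ_y(K) = (K° - y)°, where φ_y(x) = x/(1 + ⟨x, y⟩). -/

import Mathlib

/-!
A point `x` of `K` pairs with `z - y` (`z ∈ K°`) to at least `-1 - ⟪x, y⟫`, and
`1 + ⟪x, y⟫ > 0` because `y` is interior to `K°`; dividing by it gives `φ_y(K) ⊆ (K° - y)°`.
Conversely, `φ_y` is inverted by `w ↦ w / (1 - ⟪w, y⟫)`: for `w ∈ (K° - y)°` the
denominator is positive because `0` is interior to `K°` (`K` is bounded), and the preimage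
pairs to at least `-1` with `K°`, so lies in `K°° = K` by the bipolar theorem.
-/

open scoped RealInnerProductSpace

/-- The polar dual with the sign convention of the paper:
`K° = {y : ⟨x,y⟩ ≥ -1 for all x ∈ K}`. -/
def polarDual {d : ℕ} (K : Set (EuclideanSpace ℝ (Fin d))) :
    Set (EuclideanSpace ℝ (Fin d)) :=
  {y | ∀ x ∈ K, -1 ≤ ⟪x, y⟫}

open Filter Topology Set

theorem lt_inner_of_mem_interior {E : Type*} [NormedAddCommGroup E] [InnerProductSpace ℝ E]
    {S : Set E} {x y : E} {c : ℝ} (hx : x ≠ 0) (hS : ∀ z ∈ S, c ≤ ⟪x, z⟫)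
    (hy : y ∈ interior S) : c < ⟪x, y⟫ := by
  have hline : Tendsto (fun t : ℝ => y - t • x) (𝓝[>] 0) (𝓝 y) := by
    have : Continuous (fun t : ℝ => y - t • x) := by fun_prop
    exact (this.tendsto' 0 y (by simp)).mono_left nhdsWithin_le_nhds
  obtain ⟨t, hyt, ht⟩ :=
    ((hline.eventually (mem_interior_iff_mem_nhds.1 hy)).and self_mem_nhdsWithin).exists
  have hbound := hS _ hyt
  rw [inner_sub_right, real_inner_smul_right, real_inner_self_eq_norm_sq] at hbound
  have : 0 < t * ‖x‖ ^ 2 := mul_pos ht (by positivity)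
  linarith

section polarDual

variable {d : ℕ} {K S : Set (EuclideanSpace ℝ (Fin d))} {x y w : EuclideanSpace ℝ (Fin d)}

theorem polarDual_polarDual (hconv : Convex ℝ K) (hclosed : IsClosed K) (h0 : 0 ∈ K) :
    polarDual (polarDual K) = K := by
  refine Subset.antisymm (fun x hx => ?_) fun x hx z hz => real_inner_comm x z ▸ hz x hx
  by_contra hxK
  obtain ⟨f, u, hfx, hfK⟩ := geometric_hahn_banach_point_closed hconv hclosed hxK
  have hu : 0 < -u := by simpa using hfK 0 h0
  -- `f / (-u)` is the functional of a point of `K°` on which `x` takes a value `< -1`.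
  set z := (-u)⁻¹ • (InnerProductSpace.toDual ℝ _).symm f
  have hz : ∀ v, ⟪v, z⟫ = f v / -u := fun v => by
    rw [real_inner_smul_right, real_inner_comm, InnerProductSpace.toDual_symm_apply,
      inv_mul_eq_div]
  have hzK : z ∈ polarDual K := fun a ha => by
    rw [hz, le_div_iff₀ hu]
    linarith [hfK a ha]
  have hxz := hx z hzK
  rw [real_inner_comm, hz, le_div_iff₀ hu] at hxz
  linarith

theorem zero_mem_interior_polarDual (hK : Bornology.IsBounded K) :
    0 ∈ interior (polarDual K) := by
  obtain ⟨r, hr, hKr⟩ := hK.subset_closedBall_lt 0 0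
  refine mem_interior.2 ⟨Metric.ball 0 r⁻¹, fun z hz x hx => ?_, Metric.isOpen_ball,
    Metric.mem_ball_self (inv_pos.2 hr)⟩
  have hxr : ‖x‖ ≤ r := mem_closedBall_zero_iff.1 (hKr hx)
  have hzr : ‖z‖ ≤ r⁻¹ := (mem_ball_zero_iff.1 hz).le
  calc -1 = -(r * r⁻¹) := by rw [mul_inv_cancel₀ hr.ne']
    _ ≤ -(‖x‖ * ‖z‖) := neg_le_neg (mul_le_mul hxr hzr (norm_nonneg z) hr.le)
    _ ≤ ⟪x, z⟫ := neg_le_of_abs_le (abs_real_inner_le_norm x z)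

theorem neg_one_lt_inner_of_mem_interior_polarDual (hx : x ∈ K)
    (hy : y ∈ interior (polarDual K)) : -1 < ⟪x, y⟫ := by
  rcases eq_or_ne x 0 with rfl | hx0
  · simp
  · exact lt_inner_of_mem_interior (S := polarDual K) hx0 (fun z hz => hz x hx) hy

theorem mem_polarDual_image_sub_iff :
    w ∈ polarDual ((fun z => z - y) '' S) ↔ ∀ z ∈ S, ⟪w, y⟫ - 1 ≤ ⟪w, z⟫ := by
  simp only [polarDual, mem_ofPred_eq, forall_mem_image, inner_sub_left, real_inner_comm w]
  exact forall₂_congr fun _ _ => by constructor <;> intro h <;> linarith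

theorem inv_one_add_inner_smul_mem_polarDual_image_sub (hx : x ∈ K) (hxy : 0 < 1 + ⟪x, y⟫) :
    (1 + ⟪x, y⟫)⁻¹ • x ∈ polarDual ((fun z => z - y) '' polarDual K) := by
  refine mem_polarDual_image_sub_iff.2 fun z hz => ?_
  rw [real_inner_smul_left, real_inner_smul_left]
  calc (1 + ⟪x, y⟫)⁻¹ * ⟪x, y⟫ - 1 = (1 + ⟪x, y⟫)⁻¹ * -1 := by field_simp; ring
    _ ≤ (1 + ⟪x, y⟫)⁻¹ * ⟪x, z⟫ := mul_le_mul_of_nonneg_left (hz x hx) (inv_nonneg.2 hxy.le)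

theorem inner_lt_one_of_mem_polarDual_image_sub (hS : 0 ∈ interior S)
    (hw : w ∈ polarDual ((fun z => z - y) '' S)) : ⟪w, y⟫ < 1 := by
  rcases eq_or_ne w 0 with rfl | hw0
  · simp
  · simpa using lt_inner_of_mem_interior hw0 (mem_polarDual_image_sub_iff.1 hw) hS

theorem inv_one_sub_inner_smul_mem_polarDual (hwy : ⟪w, y⟫ < 1)
    (hw : w ∈ polarDual ((fun z => z - y) '' S)) :
    (1 - ⟪w, y⟫)⁻¹ • w ∈ polarDual S := fun z hz => by
  have ht : 0 < 1 - ⟪w, y⟫ := sub_pos.2 hwy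
  rw [real_inner_smul_right, real_inner_comm w z, ← div_eq_inv_mul, le_div_iff₀ ht]
  linarith [mem_polarDual_image_sub_iff.1 hw z hz]

theorem inv_one_add_inner_smul_inv_one_sub_inner_smul (hwy : ⟪w, y⟫ ≠ 1) :
    (1 + ⟪(1 - ⟪w, y⟫)⁻¹ • w, y⟫)⁻¹ • (1 - ⟪w, y⟫)⁻¹ • w = w := by
  have ht : 1 - ⟪w, y⟫ ≠ 0 := sub_ne_zero.2 hwy.symm
  have hcoef : 1 + ⟪(1 - ⟪w, y⟫)⁻¹ • w, y⟫ = (1 - ⟪w, y⟫)⁻¹ := by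
    rw [real_inner_smul_left]
    field_simp
    ring
  rw [hcoef, inv_inv, smul_inv_smul₀ ht]

end polarDual

/-- for a convex body `K` with `0 ∈ int K` and `y ∈ int K°`,
the image of `K` under `φ_y(x) = x/(1+⟨x,y⟩)` equals `(K° - y)°`. -/
theorem phi_image_eq_polar_of_translate
    (d : ℕ) (K : Set (EuclideanSpace ℝ (Fin d)))
    (hKconv : Convex ℝ K) (hKcomp : IsCompact K)
    (h0 : (0 : EuclideanSpace ℝ (Fin d)) ∈ interior K)
    (y : EuclideanSpace ℝ (Fin d)) (hy : y ∈ interior (polarDual K)) :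
    (fun x => (1 + ⟪x, y⟫)⁻¹ • x) '' K
      = polarDual ((fun z => z - y) '' polarDual K) := by
  refine Subset.antisymm ?_ fun w hw => ?_
  · rintro _ ⟨x, hx, rfl⟩
    have hxy := neg_one_lt_inner_of_mem_interior_polarDual hx hy
    exact inv_one_add_inner_smul_mem_polarDual_image_sub hx (by linarith)
  · have hwy := inner_lt_one_of_mem_polarDual_image_sub
      (zero_mem_interior_polarDual hKcomp.isBounded) hw
    refine ⟨(1 - ⟪w, y⟫)⁻¹ • w, ?_, inv_one_add_inner_smul_inv_one_sub_inner_smul hwy.ne⟩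
    rw [← polarDual_polarDual hKconv hKcomp.isClosed (interior_subset h0)]
    exact inv_one_sub_inner_smul_mem_polarDual hwy hw
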